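/- Fix v_T ≥ 0, v_A with v_T < v_A < 1 − v_T, and X₀ > 0, Y₀ < 0. Among all constant attacker headings φ ∈ (0, π) such that v_A sin φ > 0, the X-intercept X_f(φ) = X₀ − Y₀·(v_A cos φ − 1 − v_T)/(v_A sin φ) of the line through (X₀,Y₀) with slope (v_A sin φ)/(v_A cos φ − 1 − v_T) is maximized at cos φ = v_A/(1+v_T). -/

import Mathlib

/-!
Write `B = 1 + v_T` and `D = √(B² - v_A²)`, so that `(v_A, D)` has length `B`. By Cauchy–Schwarz
`v_A cos φ + D sin φ ≤ B`, i.e. `(v_A cos φ - B) / (v_A sin φ) ≤ -D / v_A` whenever `sin φ > 0`, and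
equality holds at `cos φ = v_A / B`, `sin φ = D / B`. Multiplying by `-Y₀ ≥ 0` gives the claim.
-/

open Real

theorem mul_cos_add_mul_sin_le_sqrt (a b φ : ℝ) : a * cos φ + b * sin φ ≤ √(a ^ 2 + b ^ 2) :=
  Real.le_sqrt_of_sq_le <| by
    nlinarith [sin_sq_add_cos_sq φ, sq_nonneg (a * sin φ - b * cos φ)]

section Heading

variable {v B : ℝ}

theorem mul_cos_sub_div_mul_sin_le (hv : 0 < v) (hvB : v ≤ B) {φ : ℝ} (hs : 0 < sin φ) :
    (v * cos φ - B) / (v * sin φ) ≤ -√(B ^ 2 - v ^ 2) / v := by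
  have hB : √(v ^ 2 + √(B ^ 2 - v ^ 2) ^ 2) = B := by
    rw [sq_sqrt (by nlinarith), add_sub_cancel, sqrt_sq (by linarith)]
  have key := mul_cos_add_mul_sin_le_sqrt v √(B ^ 2 - v ^ 2) φ
  rw [hB] at key
  rw [div_le_div_iff₀ (by positivity) hv]
  nlinarith

theorem mul_cos_arccos_sub_div_mul_sin_arccos (hv : 0 < v) (hvB : v ≤ B) :
    (v * cos (arccos (v / B)) - B) / (v * sin (arccos (v / B))) = -√(B ^ 2 - v ^ 2) / v := by
  have hB : 0 < B := hv.trans_le hvB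
  have hcos : cos (arccos (v / B)) = v / B :=
    cos_arccos (by linarith [div_nonneg hv.le hB.le]) ((div_le_one hB).2 hvB)
  have hsin : sin (arccos (v / B)) = √(B ^ 2 - v ^ 2) / B := by
    rw [sin_arccos, div_pow, one_sub_div (by positivity), sqrt_div' _ (sq_nonneg B), sqrt_sq hB.le]
  have hD : √(B ^ 2 - v ^ 2) ^ 2 = B ^ 2 - v ^ 2 := sq_sqrt (by nlinarith)
  rw [hcos, hsin]
  rcases (sqrt_nonneg (B ^ 2 - v ^ 2)).eq_or_lt with hD0 | hDpos
  · -- `v = B`: the left side is `0 / 0 = 0`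
    have : v = B := by nlinarith
    simp [this]
  · field_simp
    nlinarith

end Heading

theorem attacker_optimal_heading_lambda_pos_general (vT vA X₀ Y₀ : ℝ)
    (hT : 0 ≤ vT) (hA2 : vA < 1 - vT)
    (hY : Y₀ < 0) :
    ∀ φ : ℝ, 0 < φ → φ < Real.pi → 0 < vA * Real.sin φ →
      X₀ - Y₀ * (vA * Real.cos φ - 1 - vT) / (vA * Real.sin φ) ≤
        X₀ - Y₀ * (vA * Real.cos (Real.arccos (vA / (1 + vT))) - 1 - vT) /
          (vA * Real.sin (Real.arccos (vA / (1 + vT)))) := by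
  intro φ hφ0 hφπ hvs
  have hs : 0 < sin φ := sin_pos_of_pos_of_lt_pi hφ0 hφπ
  have hv : 0 < vA := pos_of_mul_pos_left hvs hs.le
  have hvB : vA ≤ 1 + vT := by linarith
  simp only [sub_sub, mul_div_assoc, mul_cos_arccos_sub_div_mul_sin_arccos hv hvB]
  exact sub_le_sub_left
    (mul_le_mul_of_nonpos_left (mul_cos_sub_div_mul_sin_le hv hvB hs) hY.le) X₀

theorem attacker_optimal_heading_lambda_pos (vT vA X₀ Y₀ : ℝ)
    (hT : 0 ≤ vT) (hA1 : vT < vA) (hA2 : vA < 1 - vT)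
    (hX : 0 < X₀) (hY : Y₀ < 0) :
    ∀ φ : ℝ, 0 < φ → φ < Real.pi → 0 < vA * Real.sin φ →
      X₀ - Y₀ * (vA * Real.cos φ - 1 - vT) / (vA * Real.sin φ) ≤
        X₀ - Y₀ * (vA * Real.cos (Real.arccos (vA / (1 + vT))) - 1 - vT) /
          (vA * Real.sin (Real.arccos (vA / (1 + vT)))) :=
  attacker_optimal_heading_lambda_pos_general vT vA X₀ Y₀ hT hA2 hY
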